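/- For every unit vector v ∈ X_W, the minimal local eigenvalues satisfy (1/2 − p₁(v))² + (1/2 − p₂(v))² + (1/2 − p₃(v))² ≥ 1/12, and equality is attained at the W state w₃ itself, all of whose one-qubit reduced density matrices have minimal eigenvalue 1/3. (In momentum-map coordinates: the image of w₃ is the closest point to the origin in the Kirwan polytope of X_W.) -/
import Mathlib


open scoped BigOperators

/-- The three-qubit Hilbert space. -/
abbrev H3 := (Fin 2 × Fin 2 × Fin 2) → ℂ

/-- Squared Hermitian norm of a vector in `H3`. -/
noncomputable def normSq3 (v : H3) : ℝ := ∑ x : Fin 2 × Fin 2 × Fin 2, Complex.normSq (v x)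

/-- First one-qubit reduced density matrix. -/
noncomputable def rho1 (v : H3) : Matrix (Fin 2) (Fin 2) ℂ :=
  Matrix.of fun a a' => ∑ b : Fin 2, ∑ c : Fin 2, v (a, b, c) * star (v (a', b, c))

/-- Second one-qubit reduced density matrix. -/
noncomputable def rho2 (v : H3) : Matrix (Fin 2) (Fin 2) ℂ :=
  Matrix.of fun b b' => ∑ a : Fin 2, ∑ c : Fin 2, v (a, b, c) * star (v (a, b', c))

/-- Third one-qubit reduced density matrix. -/
noncomputable def rho3 (v : H3) : Matrix (Fin 2) (Fin 2) ℂ :=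
  Matrix.of fun c c' => ∑ a : Fin 2, ∑ b : Fin 2, v (a, b, c) * star (v (a, b, c'))

/-- Minimal (real) eigenvalue of a 2×2 complex matrix. -/
noncomputable def minEig (ρ : Matrix (Fin 2) (Fin 2) ℂ) : ℝ :=
  sInf {t : ℝ | (t : ℂ) ∈ spectrum ℂ ρ}

noncomputable def p1 (v : H3) : ℝ := minEig (rho1 v)
noncomputable def p2 (v : H3) : ℝ := minEig (rho2 v)
noncomputable def p3 (v : H3) : ℝ := minEig (rho3 v)

/-- The action of a triple of 2×2 matrices on `H3` by the tensor product. -/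
noncomputable def tensor3 (A1 A2 A3 : Matrix (Fin 2) (Fin 2) ℂ) (v : H3) : H3 :=
  fun x => ∑ a' : Fin 2, ∑ b' : Fin 2, ∑ c' : Fin 2,
    A1 x.1 a' * A2 x.2.1 b' * A3 x.2.2 c' * v (a', b', c')

/-- Local unitary equivalence of three-qubit states. -/
def LUequiv (v w : H3) : Prop :=
  ∃ U1 U2 U3 : Matrix (Fin 2) (Fin 2) ℂ,
    U1 ∈ Matrix.unitaryGroup (Fin 2) ℂ ∧ U2 ∈ Matrix.unitaryGroup (Fin 2) ℂ ∧
    U3 ∈ Matrix.unitaryGroup (Fin 2) ℂ ∧ w = tensor3 U1 U2 U3 v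

/-- The three-qubit W state. -/
noncomputable def wState : H3 := fun x =>
  if (x.1 = 1 ∧ x.2.1 = 0 ∧ x.2.2 = 0) ∨ (x.1 = 0 ∧ x.2.1 = 1 ∧ x.2.2 = 0) ∨
      (x.1 = 0 ∧ x.2.1 = 0 ∧ x.2.2 = 1)
  then ((1 / Real.sqrt 3 : ℝ) : ℂ) else 0

/-- The SLOCC class of the W state. -/
def WClass : Set H3 :=
  {v | ∃ (A1 A2 A3 : Matrix (Fin 2) (Fin 2) ℂ) (l : ℂ),
    A1.det = 1 ∧ A2.det = 1 ∧ A3.det = 1 ∧ l ≠ 0 ∧ v = l • tensor3 A1 A2 A3 wState}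

/-! ### Auxiliary definitions and lemmas -/

open Complex in
/-- Real quantity `det ρ₁(v)`: product of diagonal sums minus `normSq` of off-diagonal. -/
noncomputable def D1 (v : H3) : ℝ :=
  (∑ b : Fin 2, ∑ c : Fin 2, Complex.normSq (v (0,b,c))) *
  (∑ b : Fin 2, ∑ c : Fin 2, Complex.normSq (v (1,b,c))) -
  Complex.normSq (∑ b : Fin 2, ∑ c : Fin 2, v (0,b,c) * (starRingEnd ℂ) (v (1,b,c)))

noncomputable def D2 (v : H3) : ℝ :=
  (∑ a : Fin 2, ∑ c : Fin 2, Complex.normSq (v (a,0,c))) *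
  (∑ a : Fin 2, ∑ c : Fin 2, Complex.normSq (v (a,1,c))) -
  Complex.normSq (∑ a : Fin 2, ∑ c : Fin 2, v (a,0,c) * (starRingEnd ℂ) (v (a,1,c)))

noncomputable def D3 (v : H3) : ℝ :=
  (∑ a : Fin 2, ∑ b : Fin 2, Complex.normSq (v (a,b,0))) *
  (∑ a : Fin 2, ∑ b : Fin 2, Complex.normSq (v (a,b,1))) -
  Complex.normSq (∑ a : Fin 2, ∑ b : Fin 2, v (a,b,0) * (starRingEnd ℂ) (v (a,b,1)))

lemma minEig_formula (ρ : Matrix (Fin 2) (Fin 2) ℂ) (r00 r11 : ℝ)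
    (h00 : ρ 0 0 = (r00 : ℂ)) (h11 : ρ 1 1 = (r11 : ℂ))
    (h10 : ρ 1 0 = star (ρ 0 1)) (htr : r00 + r11 = 1) :
    minEig ρ = (1 - Real.sqrt (1 - 4 * (r00 * r11 - Complex.normSq (ρ 0 1)))) / 2 := by
  set d : ℝ := r00 * r11 - Complex.normSq (ρ 0 1) with hd
  have hns : 0 ≤ Complex.normSq (ρ 0 1) := Complex.normSq_nonneg _
  have hd4 : d ≤ 1/4 := by nlinarith [sq_nonneg (r00 - r11)]
  set s := Real.sqrt (1 - 4*d) with hsdef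
  have hs0 : 0 ≤ s := Real.sqrt_nonneg _
  have hs2 : s^2 = 1 - 4*d := Real.sq_sqrt (by linarith)
  have hset : {t : ℝ | (t : ℂ) ∈ spectrum ℂ ρ} = {(1-s)/2, (1+s)/2} := by
    ext t
    have hdet : (algebraMap ℂ (Matrix (Fin 2) (Fin 2) ℂ) t - ρ).det
        = ((t:ℂ) - ρ 0 0) * ((t:ℂ) - ρ 1 1) - ρ 0 1 * ρ 1 0 := by
      simp [Matrix.det_fin_two, Matrix.algebraMap_matrix_apply]
    simp only [Set.mem_setOf_eq, spectrum.mem_iff, Matrix.isUnit_iff_isUnit_det,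
      isUnit_iff_ne_zero, not_not, hdet, h00, h11, h10]
    rw [Complex.star_def, Complex.mul_conj]
    rw [show ((t:ℂ) - (r00:ℂ)) * ((t:ℂ) - (r11:ℂ)) - (Complex.normSq (ρ 0 1) : ℂ)
        = (((t - r00) * (t - r11) - Complex.normSq (ρ 0 1) : ℝ) : ℂ) by push_cast; ring]
    rw [Complex.ofReal_eq_zero]
    have e : (t - r00) * (t - r11) - Complex.normSq (ρ 0 1)
        = (t - (1-s)/2) * (t - (1+s)/2) := by
      have hn : Complex.normSq (ρ 0 1) = r00*r11 - d := by rw [hd]; ring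
      rw [hn]; linear_combination (-t)*htr + (1/4)*hs2
    rw [e, mul_eq_zero, sub_eq_zero, sub_eq_zero]
    simp [Set.mem_insert_iff]
  rw [minEig, hset, csInf_pair, inf_eq_left]
  linarith

lemma p1_formula (v : H3) (hn : normSq3 v = 1) :
    p1 v = (1 - Real.sqrt (1 - 4 * D1 v)) / 2 ∧ D1 v ≤ 1/4 := by
  have h00 : rho1 v 0 0 = ((∑ b : Fin 2, ∑ c : Fin 2, Complex.normSq (v (0,b,c)) : ℝ) : ℂ) := by
    simp only [rho1, Matrix.of_apply, Complex.star_def, Complex.mul_conj]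
    push_cast
    rfl
  have h11 : rho1 v 1 1 = ((∑ b : Fin 2, ∑ c : Fin 2, Complex.normSq (v (1,b,c)) : ℝ) : ℂ) := by
    simp only [rho1, Matrix.of_apply, Complex.star_def, Complex.mul_conj]
    push_cast
    rfl
  have h10 : rho1 v 1 0 = star (rho1 v 0 1) := by
    simp only [rho1, Matrix.of_apply, star_sum, star_mul', star_star]
    exact Finset.sum_congr rfl fun b _ => Finset.sum_congr rfl fun c _ => mul_comm _ _
  have htr : (∑ b : Fin 2, ∑ c : Fin 2, Complex.normSq (v (0,b,c)))
      + (∑ b : Fin 2, ∑ c : Fin 2, Complex.normSq (v (1,b,c))) = 1 := by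
    simp only [normSq3, Fintype.sum_prod_type, Fin.sum_univ_two] at hn
    simp only [Fin.sum_univ_two]
    linarith
  have e : (rho1 v) 0 1 = ∑ b : Fin 2, ∑ c : Fin 2, v (0,b,c) * (starRingEnd ℂ) (v (1,b,c)) := by
    simp only [rho1, Matrix.of_apply, Complex.star_def]
  have hd : D1 v = (∑ b : Fin 2, ∑ c : Fin 2, Complex.normSq (v (0,b,c)))
      * (∑ b : Fin 2, ∑ c : Fin 2, Complex.normSq (v (1,b,c)))
      - Complex.normSq (rho1 v 0 1) := by
    rw [D1, e]
  constructor
  · have hme := minEig_formula (rho1 v) _ _ h00 h11 h10 htr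
    have hp : p1 v = minEig (rho1 v) := rfl
    rw [hp, hme, hd]
  · rw [hd]
    nlinarith [Complex.normSq_nonneg (rho1 v 0 1), sq_nonneg
      ((∑ b : Fin 2, ∑ c : Fin 2, Complex.normSq (v (0,b,c)))
        - (∑ b : Fin 2, ∑ c : Fin 2, Complex.normSq (v (1,b,c))))]

lemma p2_formula (v : H3) (hn : normSq3 v = 1) :
    p2 v = (1 - Real.sqrt (1 - 4 * D2 v)) / 2 ∧ D2 v ≤ 1/4 := by
  have h00 : rho2 v 0 0 = ((∑ a : Fin 2, ∑ c : Fin 2, Complex.normSq (v (a,0,c)) : ℝ) : ℂ) := by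
    simp only [rho2, Matrix.of_apply, Complex.star_def, Complex.mul_conj]
    push_cast
    rfl
  have h11 : rho2 v 1 1 = ((∑ a : Fin 2, ∑ c : Fin 2, Complex.normSq (v (a,1,c)) : ℝ) : ℂ) := by
    simp only [rho2, Matrix.of_apply, Complex.star_def, Complex.mul_conj]
    push_cast
    rfl
  have h10 : rho2 v 1 0 = star (rho2 v 0 1) := by
    simp only [rho2, Matrix.of_apply, star_sum, star_mul', star_star]
    exact Finset.sum_congr rfl fun b _ => Finset.sum_congr rfl fun c _ => mul_comm _ _
  have htr : (∑ a : Fin 2, ∑ c : Fin 2, Complex.normSq (v (a,0,c)))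
      + (∑ a : Fin 2, ∑ c : Fin 2, Complex.normSq (v (a,1,c))) = 1 := by
    simp only [normSq3, Fintype.sum_prod_type, Fin.sum_univ_two] at hn
    simp only [Fin.sum_univ_two]
    linarith
  have e : (rho2 v) 0 1 = ∑ a : Fin 2, ∑ c : Fin 2, v (a,0,c) * (starRingEnd ℂ) (v (a,1,c)) := by
    simp only [rho2, Matrix.of_apply, Complex.star_def]
  have hd : D2 v = (∑ a : Fin 2, ∑ c : Fin 2, Complex.normSq (v (a,0,c)))
      * (∑ a : Fin 2, ∑ c : Fin 2, Complex.normSq (v (a,1,c)))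
      - Complex.normSq (rho2 v 0 1) := by
    rw [D2, e]
  constructor
  · have hme := minEig_formula (rho2 v) _ _ h00 h11 h10 htr
    have hp : p2 v = minEig (rho2 v) := rfl
    rw [hp, hme, hd]
  · rw [hd]
    nlinarith [Complex.normSq_nonneg (rho2 v 0 1), sq_nonneg
      ((∑ a : Fin 2, ∑ c : Fin 2, Complex.normSq (v (a,0,c)))
        - (∑ a : Fin 2, ∑ c : Fin 2, Complex.normSq (v (a,1,c))))]

lemma p3_formula (v : H3) (hn : normSq3 v = 1) :
    p3 v = (1 - Real.sqrt (1 - 4 * D3 v)) / 2 ∧ D3 v ≤ 1/4 := by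
  have h00 : rho3 v 0 0 = ((∑ a : Fin 2, ∑ b : Fin 2, Complex.normSq (v (a,b,0)) : ℝ) : ℂ) := by
    simp only [rho3, Matrix.of_apply, Complex.star_def, Complex.mul_conj]
    push_cast
    rfl
  have h11 : rho3 v 1 1 = ((∑ a : Fin 2, ∑ b : Fin 2, Complex.normSq (v (a,b,1)) : ℝ) : ℂ) := by
    simp only [rho3, Matrix.of_apply, Complex.star_def, Complex.mul_conj]
    push_cast
    rfl
  have h10 : rho3 v 1 0 = star (rho3 v 0 1) := by
    simp only [rho3, Matrix.of_apply, star_sum, star_mul', star_star]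
    exact Finset.sum_congr rfl fun b _ => Finset.sum_congr rfl fun c _ => mul_comm _ _
  have htr : (∑ a : Fin 2, ∑ b : Fin 2, Complex.normSq (v (a,b,0)))
      + (∑ a : Fin 2, ∑ b : Fin 2, Complex.normSq (v (a,b,1))) = 1 := by
    simp only [normSq3, Fintype.sum_prod_type, Fin.sum_univ_two] at hn
    simp only [Fin.sum_univ_two]
    linarith
  have e : (rho3 v) 0 1 = ∑ a : Fin 2, ∑ b : Fin 2, v (a,b,0) * (starRingEnd ℂ) (v (a,b,1)) := by
    simp only [rho3, Matrix.of_apply, Complex.star_def]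
  have hd : D3 v = (∑ a : Fin 2, ∑ b : Fin 2, Complex.normSq (v (a,b,0)))
      * (∑ a : Fin 2, ∑ b : Fin 2, Complex.normSq (v (a,b,1)))
      - Complex.normSq (rho3 v 0 1) := by
    rw [D3, e]
  constructor
  · have hme := minEig_formula (rho3 v) _ _ h00 h11 h10 htr
    have hp : p3 v = minEig (rho3 v) := rfl
    rw [hp, hme, hd]
  · rw [hd]
    nlinarith [Complex.normSq_nonneg (rho3 v 0 1), sq_nonneg
      ((∑ a : Fin 2, ∑ b : Fin 2, Complex.normSq (v (a,b,0)))
        - (∑ a : Fin 2, ∑ b : Fin 2, Complex.normSq (v (a,b,1))))]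

/-! ### Hermitian inner product on `H3` -/

noncomputable def Kip (f g : H3) : ℂ := ∑ x : Fin 2 × Fin 2 × Fin 2, (starRingEnd ℂ) (f x) * g x

lemma Kip_self (f : H3) : Kip f f = ((normSq3 f : ℝ) : ℂ) := by
  rw [Kip, normSq3]
  push_cast
  exact Finset.sum_congr rfl fun x _ => by rw [Complex.normSq_eq_conj_mul_self]

lemma normSq3_nonneg (f : H3) : 0 ≤ normSq3 f :=
  Finset.sum_nonneg fun x _ => Complex.normSq_nonneg _

lemma Kip_conj (f g : H3) : Kip g f = (starRingEnd ℂ) (Kip f g) := by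
  simp only [Kip, map_sum, map_mul, Complex.conj_conj]
  exact Finset.sum_congr rfl fun x _ => mul_comm _ _

set_option maxHeartbeats 1000000 in
lemma Kip_expand (f g1 g2 g3 : H3) (c1 c2 c3 : ℂ)
    (h12 : Kip g1 g2 = 0) (h13 : Kip g1 g3 = 0) (h23 : Kip g2 g3 = 0)
    (h21 : Kip g2 g1 = 0) (h31 : Kip g3 g1 = 0) (h32 : Kip g3 g2 = 0) :
    Kip (fun x => f x - c1 * g1 x - c2 * g2 x - c3 * g3 x)
        (fun x => f x - c1 * g1 x - c2 * g2 x - c3 * g3 x)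
    = Kip f f
      - (starRingEnd ℂ) c1 * Kip g1 f - c1 * Kip f g1 + c1 * (starRingEnd ℂ) c1 * Kip g1 g1
      - (starRingEnd ℂ) c2 * Kip g2 f - c2 * Kip f g2 + c2 * (starRingEnd ℂ) c2 * Kip g2 g2
      - (starRingEnd ℂ) c3 * Kip g3 f - c3 * Kip f g3 + c3 * (starRingEnd ℂ) c3 * Kip g3 g3 := by
  have point : ∀ x : Fin 2 × Fin 2 × Fin 2,
      (starRingEnd ℂ) (f x - c1 * g1 x - c2 * g2 x - c3 * g3 x)
        * (f x - c1 * g1 x - c2 * g2 x - c3 * g3 x)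
      = ((starRingEnd ℂ) (f x) * f x
        - (starRingEnd ℂ) c1 * ((starRingEnd ℂ) (g1 x) * f x)
        - c1 * ((starRingEnd ℂ) (f x) * g1 x)
        + c1 * (starRingEnd ℂ) c1 * ((starRingEnd ℂ) (g1 x) * g1 x)
        - (starRingEnd ℂ) c2 * ((starRingEnd ℂ) (g2 x) * f x)
        - c2 * ((starRingEnd ℂ) (f x) * g2 x)
        + c2 * (starRingEnd ℂ) c2 * ((starRingEnd ℂ) (g2 x) * g2 x)
        - (starRingEnd ℂ) c3 * ((starRingEnd ℂ) (g3 x) * f x)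
        - c3 * ((starRingEnd ℂ) (f x) * g3 x)
        + c3 * (starRingEnd ℂ) c3 * ((starRingEnd ℂ) (g3 x) * g3 x))
        + (c1 * (starRingEnd ℂ) c2) * ((starRingEnd ℂ) (g2 x) * g1 x)
        + (c2 * (starRingEnd ℂ) c1) * ((starRingEnd ℂ) (g1 x) * g2 x)
        + (c1 * (starRingEnd ℂ) c3) * ((starRingEnd ℂ) (g3 x) * g1 x)
        + (c3 * (starRingEnd ℂ) c1) * ((starRingEnd ℂ) (g1 x) * g3 x)
        + (c2 * (starRingEnd ℂ) c3) * ((starRingEnd ℂ) (g3 x) * g2 x)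
        + (c3 * (starRingEnd ℂ) c2) * ((starRingEnd ℂ) (g2 x) * g3 x) := by
    intro x
    simp only [map_sub, map_mul]
    ring
  rw [Kip]
  rw [Finset.sum_congr rfl fun x _ => point x]
  simp only [Finset.sum_add_distrib, Finset.sum_sub_distrib, ← Finset.mul_sum]
  rw [show (∑ x : Fin 2 × Fin 2 × Fin 2, (starRingEnd ℂ) (g2 x) * g1 x) = Kip g2 g1 from rfl,
      show (∑ x : Fin 2 × Fin 2 × Fin 2, (starRingEnd ℂ) (g1 x) * g2 x) = Kip g1 g2 from rfl,
      show (∑ x : Fin 2 × Fin 2 × Fin 2, (starRingEnd ℂ) (g3 x) * g1 x) = Kip g3 g1 from rfl,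
      show (∑ x : Fin 2 × Fin 2 × Fin 2, (starRingEnd ℂ) (g1 x) * g3 x) = Kip g1 g3 from rfl,
      show (∑ x : Fin 2 × Fin 2 × Fin 2, (starRingEnd ℂ) (g3 x) * g2 x) = Kip g3 g2 from rfl,
      show (∑ x : Fin 2 × Fin 2 × Fin 2, (starRingEnd ℂ) (g2 x) * g3 x) = Kip g2 g3 from rfl,
      h12, h13, h23, h21, h31, h32]
  simp [Kip]

/-! ### The un-normalized image of the W state, and auxiliary test vectors -/

noncomputable def Sv (A B C : Matrix (Fin 2) (Fin 2) ℂ) : H3 :=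
  fun x => A x.1 1 * B x.2.1 0 * C x.2.2 0 + A x.1 0 * B x.2.1 1 * C x.2.2 0
    + A x.1 0 * B x.2.1 0 * C x.2.2 1

noncomputable def u1v (A B C : Matrix (Fin 2) (Fin 2) ℂ) : H3 := fun x =>
  ((A 0 0 * (starRingEnd ℂ) (A 0 0) + A 1 0 * (starRingEnd ℂ) (A 1 0)) * A x.1 1
    - ((starRingEnd ℂ) (A 0 0) * A 0 1 + (starRingEnd ℂ) (A 1 0) * A 1 1) * A x.1 0)
    * B x.2.1 0 * C x.2.2 0

noncomputable def u2v (A B C : Matrix (Fin 2) (Fin 2) ℂ) : H3 := fun x =>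
  A x.1 0 * ((B 0 0 * (starRingEnd ℂ) (B 0 0) + B 1 0 * (starRingEnd ℂ) (B 1 0)) * B x.2.1 1
    - ((starRingEnd ℂ) (B 0 0) * B 0 1 + (starRingEnd ℂ) (B 1 0) * B 1 1) * B x.2.1 0)
    * C x.2.2 0

noncomputable def u3v (A B C : Matrix (Fin 2) (Fin 2) ℂ) : H3 := fun x =>
  A x.1 0 * B x.2.1 0 *
    ((C 0 0 * (starRingEnd ℂ) (C 0 0) + C 1 0 * (starRingEnd ℂ) (C 1 0)) * C x.2.2 1
    - ((starRingEnd ℂ) (C 0 0) * C 0 1 + (starRingEnd ℂ) (C 1 0) * C 1 1) * C x.2.2 0)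

section UniversalIdentities

variable (A B C : Matrix (Fin 2) (Fin 2) ℂ)

set_option maxHeartbeats 1000000 in
lemma Kip_S_u1 : Kip (Sv A B C) (u1v A B C) = (A.det * (starRingEnd ℂ) A.det)
    * ((B 0 0 * (starRingEnd ℂ) (B 0 0) + B 1 0 * (starRingEnd ℂ) (B 1 0))
    * (C 0 0 * (starRingEnd ℂ) (C 0 0) + C 1 0 * (starRingEnd ℂ) (C 1 0))) := by
  simp only [Kip, Sv, u1v, Matrix.det_fin_two, Fintype.sum_prod_type, Fin.sum_univ_two,
    map_add, map_mul, map_sub, Complex.conj_conj]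
  ring

set_option maxHeartbeats 1000000 in
lemma Kip_S_u2 : Kip (Sv A B C) (u2v A B C) = (B.det * (starRingEnd ℂ) B.det)
    * ((A 0 0 * (starRingEnd ℂ) (A 0 0) + A 1 0 * (starRingEnd ℂ) (A 1 0))
    * (C 0 0 * (starRingEnd ℂ) (C 0 0) + C 1 0 * (starRingEnd ℂ) (C 1 0))) := by
  simp only [Kip, Sv, u2v, Matrix.det_fin_two, Fintype.sum_prod_type, Fin.sum_univ_two,
    map_add, map_mul, map_sub, Complex.conj_conj]
  ring

set_option maxHeartbeats 1000000 in
lemma Kip_S_u3 : Kip (Sv A B C) (u3v A B C) = (C.det * (starRingEnd ℂ) C.det)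
    * ((A 0 0 * (starRingEnd ℂ) (A 0 0) + A 1 0 * (starRingEnd ℂ) (A 1 0))
    * (B 0 0 * (starRingEnd ℂ) (B 0 0) + B 1 0 * (starRingEnd ℂ) (B 1 0))) := by
  simp only [Kip, Sv, u3v, Matrix.det_fin_two, Fintype.sum_prod_type, Fin.sum_univ_two,
    map_add, map_mul, map_sub, Complex.conj_conj]
  ring

set_option maxHeartbeats 1000000 in
lemma Kip_u1_u1 : Kip (u1v A B C) (u1v A B C) = (A.det * (starRingEnd ℂ) A.det)
    * ((A 0 0 * (starRingEnd ℂ) (A 0 0) + A 1 0 * (starRingEnd ℂ) (A 1 0))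
    * ((B 0 0 * (starRingEnd ℂ) (B 0 0) + B 1 0 * (starRingEnd ℂ) (B 1 0))
    * (C 0 0 * (starRingEnd ℂ) (C 0 0) + C 1 0 * (starRingEnd ℂ) (C 1 0)))) := by
  simp only [Kip, u1v, Matrix.det_fin_two, Fintype.sum_prod_type, Fin.sum_univ_two,
    map_add, map_mul, map_sub, Complex.conj_conj]
  ring

set_option maxHeartbeats 1000000 in
lemma Kip_u2_u2 : Kip (u2v A B C) (u2v A B C) = (B.det * (starRingEnd ℂ) B.det)
    * ((B 0 0 * (starRingEnd ℂ) (B 0 0) + B 1 0 * (starRingEnd ℂ) (B 1 0))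
    * ((A 0 0 * (starRingEnd ℂ) (A 0 0) + A 1 0 * (starRingEnd ℂ) (A 1 0))
    * (C 0 0 * (starRingEnd ℂ) (C 0 0) + C 1 0 * (starRingEnd ℂ) (C 1 0)))) := by
  simp only [Kip, u2v, Matrix.det_fin_two, Fintype.sum_prod_type, Fin.sum_univ_two,
    map_add, map_mul, map_sub, Complex.conj_conj]
  ring

set_option maxHeartbeats 1000000 in
lemma Kip_u3_u3 : Kip (u3v A B C) (u3v A B C) = (C.det * (starRingEnd ℂ) C.det)
    * ((C 0 0 * (starRingEnd ℂ) (C 0 0) + C 1 0 * (starRingEnd ℂ) (C 1 0))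
    * ((A 0 0 * (starRingEnd ℂ) (A 0 0) + A 1 0 * (starRingEnd ℂ) (A 1 0))
    * (B 0 0 * (starRingEnd ℂ) (B 0 0) + B 1 0 * (starRingEnd ℂ) (B 1 0)))) := by
  simp only [Kip, u3v, Matrix.det_fin_two, Fintype.sum_prod_type, Fin.sum_univ_two,
    map_add, map_mul, map_sub, Complex.conj_conj]
  ring

set_option maxHeartbeats 1000000 in
lemma Kip_u1_u2 : Kip (u1v A B C) (u2v A B C) = 0 := by
  simp only [Kip, u1v, u2v, Fintype.sum_prod_type, Fin.sum_univ_two, map_add, map_mul,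
    map_sub, Complex.conj_conj]
  ring

set_option maxHeartbeats 1000000 in
lemma Kip_u1_u3 : Kip (u1v A B C) (u3v A B C) = 0 := by
  simp only [Kip, u1v, u3v, Fintype.sum_prod_type, Fin.sum_univ_two, map_add, map_mul,
    map_sub, Complex.conj_conj]
  ring

set_option maxHeartbeats 1000000 in
lemma Kip_u2_u3 : Kip (u2v A B C) (u3v A B C) = 0 := by
  simp only [Kip, u2v, u3v, Fintype.sum_prod_type, Fin.sum_univ_two, map_add, map_mul,
    map_sub, Complex.conj_conj]
  ring

set_option maxHeartbeats 1000000 in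
lemma D1_Sv : ((D1 (Sv A B C) : ℝ) : ℂ) = (A.det * (starRingEnd ℂ) A.det) *
    ((B 0 0 * (starRingEnd ℂ) (B 0 0) + B 1 0 * (starRingEnd ℂ) (B 1 0))^2
      * (C.det * (starRingEnd ℂ) C.det)
    + (C 0 0 * (starRingEnd ℂ) (C 0 0) + C 1 0 * (starRingEnd ℂ) (C 1 0))^2
      * (B.det * (starRingEnd ℂ) B.det)) := by
  rw [D1]
  push_cast
  simp only [← Complex.mul_conj]
  simp only [Sv, Matrix.det_fin_two, Fin.sum_univ_two, map_add, map_mul, map_sub,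
    Complex.conj_conj]
  ring

set_option maxHeartbeats 1000000 in
lemma D2_Sv : ((D2 (Sv A B C) : ℝ) : ℂ) = (B.det * (starRingEnd ℂ) B.det) *
    ((A 0 0 * (starRingEnd ℂ) (A 0 0) + A 1 0 * (starRingEnd ℂ) (A 1 0))^2
      * (C.det * (starRingEnd ℂ) C.det)
    + (C 0 0 * (starRingEnd ℂ) (C 0 0) + C 1 0 * (starRingEnd ℂ) (C 1 0))^2
      * (A.det * (starRingEnd ℂ) A.det)) := by
  rw [D2]
  push_cast
  simp only [← Complex.mul_conj]
  simp only [Sv, Matrix.det_fin_two, Fin.sum_univ_two, map_add, map_mul, map_sub,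
    Complex.conj_conj]
  ring

set_option maxHeartbeats 1000000 in
lemma D3_Sv : ((D3 (Sv A B C) : ℝ) : ℂ) = (C.det * (starRingEnd ℂ) C.det) *
    ((A 0 0 * (starRingEnd ℂ) (A 0 0) + A 1 0 * (starRingEnd ℂ) (A 1 0))^2
      * (B.det * (starRingEnd ℂ) B.det)
    + (B 0 0 * (starRingEnd ℂ) (B 0 0) + B 1 0 * (starRingEnd ℂ) (B 1 0))^2
      * (A.det * (starRingEnd ℂ) A.det)) := by
  rw [D3]
  push_cast
  simp only [← Complex.mul_conj]
  simp only [Sv, Matrix.det_fin_two, Fin.sum_univ_two, map_add, map_mul, map_sub,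
    Complex.conj_conj]
  ring

end UniversalIdentities

/-! ### Scaling -/

lemma D1_smul (c : ℂ) (f : H3) : D1 (fun x => c * f x) = (Complex.normSq c)^2 * D1 f := by
  rw [D1, D1]
  rw [show (∑ b : Fin 2, ∑ c' : Fin 2, Complex.normSq (c * f (0,b,c')))
      = Complex.normSq c * ∑ b : Fin 2, ∑ c' : Fin 2, Complex.normSq (f (0,b,c')) by
    simp only [Fin.sum_univ_two, Complex.normSq_mul]; ring]
  rw [show (∑ b : Fin 2, ∑ c' : Fin 2, Complex.normSq (c * f (1,b,c')))
      = Complex.normSq c * ∑ b : Fin 2, ∑ c' : Fin 2, Complex.normSq (f (1,b,c')) by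
    simp only [Fin.sum_univ_two, Complex.normSq_mul]; ring]
  rw [show (∑ b : Fin 2, ∑ c' : Fin 2, (c * f (0,b,c')) * (starRingEnd ℂ) (c * f (1,b,c')))
      = (c * (starRingEnd ℂ) c)
        * ∑ b : Fin 2, ∑ c' : Fin 2, f (0,b,c') * (starRingEnd ℂ) (f (1,b,c')) by
    simp only [Fin.sum_univ_two, map_mul]; ring]
  rw [Complex.normSq_mul, Complex.normSq_mul, Complex.normSq_conj]
  ring

lemma D2_smul (c : ℂ) (f : H3) : D2 (fun x => c * f x) = (Complex.normSq c)^2 * D2 f := by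
  rw [D2, D2]
  rw [show (∑ a : Fin 2, ∑ c' : Fin 2, Complex.normSq (c * f (a,0,c')))
      = Complex.normSq c * ∑ a : Fin 2, ∑ c' : Fin 2, Complex.normSq (f (a,0,c')) by
    simp only [Fin.sum_univ_two, Complex.normSq_mul]; ring]
  rw [show (∑ a : Fin 2, ∑ c' : Fin 2, Complex.normSq (c * f (a,1,c')))
      = Complex.normSq c * ∑ a : Fin 2, ∑ c' : Fin 2, Complex.normSq (f (a,1,c')) by
    simp only [Fin.sum_univ_two, Complex.normSq_mul]; ring]
  rw [show (∑ a : Fin 2, ∑ c' : Fin 2, (c * f (a,0,c')) * (starRingEnd ℂ) (c * f (a,1,c')))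
      = (c * (starRingEnd ℂ) c)
        * ∑ a : Fin 2, ∑ c' : Fin 2, f (a,0,c') * (starRingEnd ℂ) (f (a,1,c')) by
    simp only [Fin.sum_univ_two, map_mul]; ring]
  rw [Complex.normSq_mul, Complex.normSq_mul, Complex.normSq_conj]
  ring

lemma D3_smul (c : ℂ) (f : H3) : D3 (fun x => c * f x) = (Complex.normSq c)^2 * D3 f := by
  rw [D3, D3]
  rw [show (∑ a : Fin 2, ∑ b : Fin 2, Complex.normSq (c * f (a,b,0)))
      = Complex.normSq c * ∑ a : Fin 2, ∑ b : Fin 2, Complex.normSq (f (a,b,0)) by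
    simp only [Fin.sum_univ_two, Complex.normSq_mul]; ring]
  rw [show (∑ a : Fin 2, ∑ b : Fin 2, Complex.normSq (c * f (a,b,1)))
      = Complex.normSq c * ∑ a : Fin 2, ∑ b : Fin 2, Complex.normSq (f (a,b,1)) by
    simp only [Fin.sum_univ_two, Complex.normSq_mul]; ring]
  rw [show (∑ a : Fin 2, ∑ b : Fin 2, (c * f (a,b,0)) * (starRingEnd ℂ) (c * f (a,b,1)))
      = (c * (starRingEnd ℂ) c)
        * ∑ a : Fin 2, ∑ b : Fin 2, f (a,b,0) * (starRingEnd ℂ) (f (a,b,1)) by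
    simp only [Fin.sum_univ_two, map_mul]; ring]
  rw [Complex.normSq_mul, Complex.normSq_mul, Complex.normSq_conj]
  ring

lemma normSq3_smul (c : ℂ) (f : H3) :
    normSq3 (fun x => c * f x) = Complex.normSq c * normSq3 f := by
  rw [normSq3, normSq3, Finset.mul_sum]
  exact Finset.sum_congr rfl fun x _ => Complex.normSq_mul _ _

/-! ### Continuity -/

lemma continuous_D1 : Continuous D1 := by
  unfold D1
  apply Continuous.sub
  · exact (continuous_finset_sum _ fun b _ => continuous_finset_sum _ fun c _ =>
      Complex.continuous_normSq.comp (continuous_apply _)).mul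
      (continuous_finset_sum _ fun b _ => continuous_finset_sum _ fun c _ =>
      Complex.continuous_normSq.comp (continuous_apply _))
  · exact Complex.continuous_normSq.comp (continuous_finset_sum _ fun b _ =>
      continuous_finset_sum _ fun c _ =>
      (continuous_apply _).mul (Complex.continuous_conj.comp (continuous_apply _)))

lemma continuous_D2 : Continuous D2 := by
  unfold D2
  apply Continuous.sub
  · exact (continuous_finset_sum _ fun b _ => continuous_finset_sum _ fun c _ =>
      Complex.continuous_normSq.comp (continuous_apply _)).mul
      (continuous_finset_sum _ fun b _ => continuous_finset_sum _ fun c _ =>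
      Complex.continuous_normSq.comp (continuous_apply _))
  · exact Complex.continuous_normSq.comp (continuous_finset_sum _ fun b _ =>
      continuous_finset_sum _ fun c _ =>
      (continuous_apply _).mul (Complex.continuous_conj.comp (continuous_apply _)))

lemma continuous_D3 : Continuous D3 := by
  unfold D3
  apply Continuous.sub
  · exact (continuous_finset_sum _ fun b _ => continuous_finset_sum _ fun c _ =>
      Complex.continuous_normSq.comp (continuous_apply _)).mul
      (continuous_finset_sum _ fun b _ => continuous_finset_sum _ fun c _ =>
      Complex.continuous_normSq.comp (continuous_apply _))
  · exact Complex.continuous_normSq.comp (continuous_finset_sum _ fun b _ =>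
      continuous_finset_sum _ fun c _ =>
      (continuous_apply _).mul (Complex.continuous_conj.comp (continuous_apply _)))

lemma continuous_normSq3 : Continuous normSq3 := by
  unfold normSq3
  exact continuous_finset_sum _ fun x _ => Complex.continuous_normSq.comp (continuous_apply x)

/-! ### Elementary real inequality -/

lemma aux_ineq (a b c N : ℝ) (ha : 0 < a) (hb : 0 < b) (hc : 0 < c)
    (h : a⁻¹*(b*c) + b⁻¹*(a*c) + c⁻¹*(a*b) ≤ N) : 3*(a^2+b^2+c^2) ≤ N^2 := by
  have hQ : 0 < a⁻¹*(b*c) + b⁻¹*(a*c) + c⁻¹*(a*b) := by positivity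
  have h2 : 3*(a^2+b^2+c^2) ≤ (a⁻¹*(b*c) + b⁻¹*(a*c) + c⁻¹*(a*b))^2 := by
    have e : (a⁻¹*(b*c) + b⁻¹*(a*c) + c⁻¹*(a*b)) = (b^2*c^2 + a^2*c^2 + a^2*b^2)/(a*b*c) := by
      field_simp
    rw [e, div_pow, le_div_iff₀ (by positivity)]
    nlinarith [sq_nonneg (b^2*c^2 - a^2*c^2), sq_nonneg (a^2*c^2 - a^2*b^2),
      sq_nonneg (b^2*c^2 - a^2*b^2), sq_nonneg (a*b*c)]
  nlinarith

lemma col_pos (A : Matrix (Fin 2) (Fin 2) ℂ) (hA : A.det = 1) :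
    0 < Complex.normSq (A 0 0) + Complex.normSq (A 1 0) := by
  rcases (lt_or_eq_of_le (add_nonneg (Complex.normSq_nonneg (A 0 0))
      (Complex.normSq_nonneg (A 1 0)))) with h | h
  · exact h
  · exfalso
    have h1 : Complex.normSq (A 0 0) = 0 := by
      nlinarith [Complex.normSq_nonneg (A 0 0), Complex.normSq_nonneg (A 1 0)]
    have h2 : Complex.normSq (A 1 0) = 0 := by
      nlinarith [Complex.normSq_nonneg (A 0 0), Complex.normSq_nonneg (A 1 0)]
    rw [Complex.normSq_eq_zero] at h1 h2
    rw [Matrix.det_fin_two, h1, h2] at hA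
    simp at hA

/-! ### The bound on the W class -/

set_option maxHeartbeats 1000000 in
lemma wclass_bound (v : H3) (hv : v ∈ WClass) :
    D1 v + D2 v + D3 v ≤ 2/3 * (normSq3 v)^2 := by
  obtain ⟨A, B, C, l, hA, hB, hC, -, rfl⟩ := hv
  have hv' : l • tensor3 A B C wState
      = fun x => (l * ((1 / Real.sqrt 3 : ℝ) : ℂ)) * Sv A B C x := by
    funext x
    simp only [Pi.smul_apply, smul_eq_mul, tensor3, wState, Sv, Fin.sum_univ_two]
    norm_num
    ring
  rw [hv', D1_smul, D2_smul, D3_smul, normSq3_smul]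
  set k := Complex.normSq (l * ((1 / Real.sqrt 3 : ℝ) : ℂ)) with hkdef
  have hk0 : 0 ≤ k := Complex.normSq_nonneg _
  set αr := Complex.normSq (A 0 0) + Complex.normSq (A 1 0) with hαr
  set βr := Complex.normSq (B 0 0) + Complex.normSq (B 1 0) with hβr
  set γr := Complex.normSq (C 0 0) + Complex.normSq (C 1 0) with hγr
  have hα : 0 < αr := col_pos A hA
  have hβ : 0 < βr := col_pos B hB
  have hγ : 0 < γr := col_pos C hC
  have hαc : ((αr : ℝ) : ℂ) = A 0 0 * (starRingEnd ℂ) (A 0 0) + A 1 0 * (starRingEnd ℂ) (A 1 0) := by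
    rw [hαr]; push_cast; rw [Complex.mul_conj, Complex.mul_conj]
  have hβc : ((βr : ℝ) : ℂ) = B 0 0 * (starRingEnd ℂ) (B 0 0) + B 1 0 * (starRingEnd ℂ) (B 1 0) := by
    rw [hβr]; push_cast; rw [Complex.mul_conj, Complex.mul_conj]
  have hγc : ((γr : ℝ) : ℂ) = C 0 0 * (starRingEnd ℂ) (C 0 0) + C 1 0 * (starRingEnd ℂ) (C 1 0) := by
    rw [hγr]; push_cast; rw [Complex.mul_conj, Complex.mul_conj]
  have hA2 : A.det * (starRingEnd ℂ) A.det = 1 := by rw [hA]; simp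
  have hB2 : B.det * (starRingEnd ℂ) B.det = 1 := by rw [hB]; simp
  have hC2 : C.det * (starRingEnd ℂ) C.det = 1 := by rw [hC]; simp
  -- specializations of the universal inner-product identities
  have hKSu1 : Kip (Sv A B C) (u1v A B C) = ((βr * γr : ℝ) : ℂ) := by
    rw [Kip_S_u1, hA2, one_mul, ← hβc, ← hγc]; push_cast; ring
  have hKSu2 : Kip (Sv A B C) (u2v A B C) = ((αr * γr : ℝ) : ℂ) := by
    rw [Kip_S_u2, hB2, one_mul, ← hαc, ← hγc]; push_cast; ring
  have hKSu3 : Kip (Sv A B C) (u3v A B C) = ((αr * βr : ℝ) : ℂ) := by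
    rw [Kip_S_u3, hC2, one_mul, ← hαc, ← hβc]; push_cast; ring
  have hKu1S : Kip (u1v A B C) (Sv A B C) = ((βr * γr : ℝ) : ℂ) := by
    rw [Kip_conj, hKSu1, Complex.conj_ofReal]
  have hKu2S : Kip (u2v A B C) (Sv A B C) = ((αr * γr : ℝ) : ℂ) := by
    rw [Kip_conj, hKSu2, Complex.conj_ofReal]
  have hKu3S : Kip (u3v A B C) (Sv A B C) = ((αr * βr : ℝ) : ℂ) := by
    rw [Kip_conj, hKSu3, Complex.conj_ofReal]
  have hKu1u1 : Kip (u1v A B C) (u1v A B C) = ((αr * (βr * γr) : ℝ) : ℂ) := by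
    rw [Kip_u1_u1, hA2, one_mul, ← hαc, ← hβc, ← hγc]; push_cast; ring
  have hKu2u2 : Kip (u2v A B C) (u2v A B C) = ((βr * (αr * γr) : ℝ) : ℂ) := by
    rw [Kip_u2_u2, hB2, one_mul, ← hαc, ← hβc, ← hγc]; push_cast; ring
  have hKu3u3 : Kip (u3v A B C) (u3v A B C) = ((γr * (αr * βr) : ℝ) : ℂ) := by
    rw [Kip_u3_u3, hC2, one_mul, ← hαc, ← hβc, ← hγc]; push_cast; ring
  have ho12 : Kip (u1v A B C) (u2v A B C) = 0 := Kip_u1_u2 A B C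
  have ho13 : Kip (u1v A B C) (u3v A B C) = 0 := Kip_u1_u3 A B C
  have ho23 : Kip (u2v A B C) (u3v A B C) = 0 := Kip_u2_u3 A B C
  have ho21 : Kip (u2v A B C) (u1v A B C) = 0 := by rw [Kip_conj, ho12, map_zero]
  have ho31 : Kip (u3v A B C) (u1v A B C) = 0 := by rw [Kip_conj, ho13, map_zero]
  have ho32 : Kip (u3v A B C) (u2v A B C) = 0 := by rw [Kip_conj, ho23, map_zero]
  have hexp := Kip_expand (Sv A B C) (u1v A B C) (u2v A B C) (u3v A B C)
    ((αr⁻¹ : ℝ) : ℂ) ((βr⁻¹ : ℝ) : ℂ) ((γr⁻¹ : ℝ) : ℂ) ho12 ho13 ho23 ho21 ho31 ho32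
  rw [Kip_self (Sv A B C), hKu1S, hKSu1, hKu1u1, hKu2S, hKSu2, hKu2u2, hKu3S, hKSu3, hKu3u3,
    Complex.conj_ofReal, Complex.conj_ofReal, Complex.conj_ofReal] at hexp
  set NS := normSq3 (Sv A B C) with hNS
  have hreal : normSq3 (fun x => Sv A B C x - ((αr⁻¹ : ℝ) : ℂ) * u1v A B C x
      - ((βr⁻¹ : ℝ) : ℂ) * u2v A B C x - ((γr⁻¹ : ℝ) : ℂ) * u3v A B C x)
      = NS - αr⁻¹*(βr*γr) - αr⁻¹*(βr*γr) + αr⁻¹*αr⁻¹*(αr*(βr*γr))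
        - βr⁻¹*(αr*γr) - βr⁻¹*(αr*γr) + βr⁻¹*βr⁻¹*(βr*(αr*γr))
        - γr⁻¹*(αr*βr) - γr⁻¹*(αr*βr) + γr⁻¹*γr⁻¹*(γr*(αr*βr)) := by
    have h2 : ((normSq3 (fun x => Sv A B C x - ((αr⁻¹ : ℝ) : ℂ) * u1v A B C x
        - ((βr⁻¹ : ℝ) : ℂ) * u2v A B C x - ((γr⁻¹ : ℝ) : ℂ) * u3v A B C x) : ℝ) : ℂ)
        = ((NS - αr⁻¹*(βr*γr) - αr⁻¹*(βr*γr) + αr⁻¹*αr⁻¹*(αr*(βr*γr))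
        - βr⁻¹*(αr*γr) - βr⁻¹*(αr*γr) + βr⁻¹*βr⁻¹*(βr*(αr*γr))
        - γr⁻¹*(αr*βr) - γr⁻¹*(αr*βr) + γr⁻¹*γr⁻¹*(γr*(αr*βr)) : ℝ) : ℂ) := by
      rw [← Kip_self, hexp]
      push_cast
      ring
    exact_mod_cast h2
  have hpos := normSq3_nonneg (fun x => Sv A B C x - ((αr⁻¹ : ℝ) : ℂ) * u1v A B C x
      - ((βr⁻¹ : ℝ) : ℂ) * u2v A B C x - ((γr⁻¹ : ℝ) : ℂ) * u3v A B C x)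
  rw [hreal] at hpos
  have e1 : αr⁻¹*αr⁻¹*(αr*(βr*γr)) = αr⁻¹*(βr*γr) := by field_simp
  have e2 : βr⁻¹*βr⁻¹*(βr*(αr*γr)) = βr⁻¹*(αr*γr) := by field_simp
  have e3 : γr⁻¹*γr⁻¹*(γr*(αr*βr)) = γr⁻¹*(αr*βr) := by field_simp
  have hQle : αr⁻¹*(βr*γr) + βr⁻¹*(αr*γr) + γr⁻¹*(αr*βr) ≤ NS := by
    rw [e1, e2, e3] at hpos; linarith
  have h3 : 3*(αr^2+βr^2+γr^2) ≤ NS^2 := aux_ineq αr βr γr NS hα hβ hγ hQle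
  have hds1 : D1 (Sv A B C) = βr^2 + γr^2 := by
    have h := D1_Sv A B C
    rw [hA2, hB2, hC2, one_mul, mul_one, mul_one, ← hβc, ← hγc] at h
    exact_mod_cast h
  have hds2 : D2 (Sv A B C) = αr^2 + γr^2 := by
    have h := D2_Sv A B C
    rw [hA2, hB2, hC2, one_mul, mul_one, mul_one, ← hαc, ← hγc] at h
    exact_mod_cast h
  have hds3 : D3 (Sv A B C) = αr^2 + βr^2 := by
    have h := D3_Sv A B C
    rw [hA2, hB2, hC2, one_mul, mul_one, mul_one, ← hαc, ← hβc] at h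
    exact_mod_cast h
  rw [hds1, hds2, hds3]
  clear_value k NS αr βr γr
  nlinarith [mul_le_mul_of_nonneg_left h3 (sq_nonneg k)]

lemma closure_bound (v : H3) (hv : v ∈ closure WClass) :
    D1 v + D2 v + D3 v ≤ 2/3 * (normSq3 v)^2 := by
  have hcl : IsClosed {u : H3 | D1 u + D2 u + D3 u - 2/3 * (normSq3 u)^2 ≤ 0} :=
    isClosed_le (((continuous_D1.add continuous_D2).add continuous_D3).sub
      (continuous_const.mul (continuous_normSq3.pow 2))) continuous_const
  have hsub : WClass ⊆ {u : H3 | D1 u + D2 u + D3 u - 2/3 * (normSq3 u)^2 ≤ 0} := by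
    intro u hu
    have := wclass_bound u hu
    simp only [Set.mem_setOf_eq]
    linarith
  have := closure_minimal hsub hcl hv
  simp only [Set.mem_setOf_eq] at this
  linarith

/-! ### Values at the W state -/

lemma normSq_inv_sqrt3 : Complex.normSq ((1 / Real.sqrt 3 : ℝ) : ℂ) = 1/3 := by
  rw [Complex.normSq_ofReal, div_mul_div_comm, Real.mul_self_sqrt (by norm_num : (0:ℝ) ≤ 3)]
  norm_num

lemma normSq3_wState : normSq3 wState = 1 := by
  simp only [normSq3, wState, Fintype.sum_prod_type, Fin.sum_univ_two]
  norm_num [normSq_inv_sqrt3]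

lemma D1_wState : D1 wState = 2/9 := by
  simp only [D1, wState, Fin.sum_univ_two]
  norm_num [normSq_inv_sqrt3]

lemma D2_wState : D2 wState = 2/9 := by
  simp only [D2, wState, Fin.sum_univ_two]
  norm_num [normSq_inv_sqrt3]

lemma D3_wState : D3 wState = 2/9 := by
  simp only [D3, wState, Fin.sum_univ_two]
  norm_num [normSq_inv_sqrt3]

lemma sqrt_19 : Real.sqrt (1 - 4*(2/9)) = 1/3 := by
  rw [show (1 - 4*(2/9 : ℝ)) = (1/3)^2 by norm_num, Real.sqrt_sq (by norm_num : (0:ℝ) ≤ 1/3)]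

lemma p1_wState : p1 wState = 1/3 := by
  obtain ⟨hp, -⟩ := p1_formula wState normSq3_wState
  rw [D1_wState, sqrt_19] at hp
  rw [hp]; norm_num

lemma p2_wState : p2 wState = 1/3 := by
  obtain ⟨hp, -⟩ := p2_formula wState normSq3_wState
  rw [D2_wState, sqrt_19] at hp
  rw [hp]; norm_num

lemma p3_wState : p3 wState = 1/3 := by
  obtain ⟨hp, -⟩ := p3_formula wState normSq3_wState
  rw [D3_wState, sqrt_19] at hp
  rw [hp]; norm_num

theorem W_vertex_is_closest_point_to_origin_in_W_polytope :
    (∀ v : H3, v ∈ closure WClass → normSq3 v = 1 →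
      (1 / 2 - p1 v) ^ 2 + (1 / 2 - p2 v) ^ 2 + (1 / 2 - p3 v) ^ 2 ≥ 1 / 12) ∧
    p1 wState = 1 / 3 ∧ p2 wState = 1 / 3 ∧ p3 wState = 1 / 3 ∧
    (1 / 2 - p1 wState) ^ 2 + (1 / 2 - p2 wState) ^ 2 + (1 / 2 - p3 wState) ^ 2
      = 1 / 12 := by
  constructor
  · intro v hv hn
    obtain ⟨hp1, hd1⟩ := p1_formula v hn
    obtain ⟨hp2, hd2⟩ := p2_formula v hn
    obtain ⟨hp3, hd3⟩ := p3_formula v hn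
    have hb := closure_bound v hv
    rw [hn] at hb
    have e1 : (1/2 - p1 v)^2 = 1/4 - D1 v := by
      rw [hp1, show (1/2 - (1 - Real.sqrt (1 - 4*D1 v))/2) = Real.sqrt (1 - 4*D1 v)/2 by ring,
        div_pow, Real.sq_sqrt (by linarith)]
      ring
    have e2 : (1/2 - p2 v)^2 = 1/4 - D2 v := by
      rw [hp2, show (1/2 - (1 - Real.sqrt (1 - 4*D2 v))/2) = Real.sqrt (1 - 4*D2 v)/2 by ring,
        div_pow, Real.sq_sqrt (by linarith)]
      ring
    have e3 : (1/2 - p3 v)^2 = 1/4 - D3 v := by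
      rw [hp3, show (1/2 - (1 - Real.sqrt (1 - 4*D3 v))/2) = Real.sqrt (1 - 4*D3 v)/2 by ring,
        div_pow, Real.sq_sqrt (by linarith)]
      ring
    rw [e1, e2, e3]
    linarith
  · refine ⟨p1_wState, p2_wState, p3_wState, ?_⟩
    rw [p1_wState, p2_wState, p3_wState]
    norm_num
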